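/- For all integers m and n ≥ 1, with x := q^{n} and DJ^{(m)} := ∑_{k=0}^{n−1} c_{n,k}(q) H_k^{5_2}(q) q^{km} ∈ ℚ(q), the descendant colored Jones polynomials of the 5_2 knot satisfy the inhomogeneous fifth-order linear q-difference equation: (−1+q^{1+m})(−1+q^{2+m}) x² DJ^{(m)} − q^{2+m}(−1+q^{2+m}) x (1 + q + x + (1+q) x²) DJ^{(m+1)} + q^{3+m} ( q^{3+m} + (−1 + q^{2+m} + q^{3+m}) x + (−2 − q + q^{2+m} + 2 q^{3+m} + q^{4+m}) x² + (−1 + q^{2+m} + q^{3+m}) x³ + q^{3+m} x⁴ ) DJ^{(m+2)} − q^{4+m} ( q^{3+m} + (−1 + q^{3+m} + q^{4+m}) x + (−1 + q^{2+m} + 2 q^{3+m} + q^{4+m}) x² + (−1 + q^{3+m} + q^{4+m}) x³ + q^{3+m} x⁴ ) DJ^{(m+3)} + q^{5+m} x ( q^{3+m} + q^{4+m} + (−1 + q^{4+m}) x + (q^{3+m} + q^{4+m}) x² ) DJ^{(m+4)} − q^{10+2m} x² DJ^{(m+5)} = x². -/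

import Mathlib

open Finset

/-- The variable `q` of the field `ℚ(q)` of rational functions. -/
noncomputable def q : RatFunc ℚ := RatFunc.X

/-- `(q;q)_k := ∏_{t=1}^{k}(1 − q^t)`. -/
noncomputable def qq (k : ℕ) : RatFunc ℚ := ∏ t ∈ range k, (1 - q ^ (t + 1))

/-- The Gaussian `q`-binomial coefficient `[k choose s]_q`. -/
noncomputable def qbinom (k s : ℕ) : RatFunc ℚ := qq k / (qq s * qq (k - s))

/-- The Habiro polynomials of the `5₂` knot. -/
noncomputable def H52 (k : ℕ) : RatFunc ℚ :=
  (-1) ^ k * q ^ ((k : ℤ) * ((k : ℤ) + 3) / 2) *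
    ∑ s ∈ range (k + 1), q ^ ((s : ℤ) * ((s : ℤ) + 1)) * qbinom k s

/-- The cyclotomic kernel `c_{n,k}(q) := q^{−kn} (q^{n+1};q)_k (q^{n−1};q^{−1})_k`. -/
noncomputable def c (n : ℤ) (k : ℕ) : RatFunc ℚ :=
  q ^ (-(k : ℤ) * n) * (∏ t ∈ range k, (1 - q ^ (n + 1) * q ^ (t : ℤ))) *
    ∏ t ∈ range k, (1 - q ^ (n - 1) * q ^ (-(t : ℤ)))

/-- The descendant colored Jones polynomials of the `5₂` knot. -/
noncomputable def DJ52 (n : ℤ) (m : ℤ) : RatFunc ℚ :=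
  ∑ k ∈ range n.toNat, c n k * H52 k * q ^ ((k : ℤ) * m)

lemma q_ne_zero : q ≠ 0 := RatFunc.X_ne_zero

lemma q_pow_ne_one (t : ℕ) (ht : t ≠ 0) : q ^ t ≠ 1 := by
  have : (Polynomial.X : Polynomial ℚ) ^ t ≠ 1 := by
    intro h
    have := congrArg Polynomial.natDegree h
    simp [Polynomial.natDegree_X_pow] at this
    exact ht this
  intro h
  apply this
  have hinj := RatFunc.algebraMap_injective ℚ
  apply hinj
  rw [map_pow, map_one, RatFunc.algebraMap_X]
  exact h

lemma one_sub_q_pow_ne_zero (t : ℕ) : (1 : RatFunc ℚ) - q ^ (t + 1) ≠ 0 := by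
  intro h
  exact q_pow_ne_one (t + 1) (Nat.succ_ne_zero t) (by linear_combination -h)

lemma qq_zero : qq 0 = 1 := by simp [qq]

lemma qq_succ (k : ℕ) : qq (k + 1) = qq k * (1 - q ^ (k + 1)) := by
  simp [qq, Finset.prod_range_succ]

lemma qq_ne_zero (k : ℕ) : qq k ≠ 0 := by
  induction k with
  | zero => simp [qq_zero]
  | succ n ih => rw [qq_succ]; exact mul_ne_zero ih (one_sub_q_pow_ne_zero n)

/-- truncated Gaussian binomial -/

noncomputable def qb (k s : ℕ) : RatFunc ℚ := if s ≤ k then qbinom k s else 0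

lemma qb_self (k : ℕ) : qb k k = 1 := by
  rw [qb, if_pos le_rfl, qbinom, Nat.sub_self, qq_zero, mul_one, div_self (qq_ne_zero k)]

lemma qb_zero (k : ℕ) : qb k 0 = 1 := by
  rw [qb, if_pos (Nat.zero_le k), qbinom, Nat.sub_zero, qq_zero, one_mul,
    div_self (qq_ne_zero k)]

lemma qb_of_gt {k s : ℕ} (h : k < s) : qb k s = 0 := by
  rw [qb, if_neg (by omega)]

lemma qb_eq {k s : ℕ} (h : s ≤ k) : qb k s = qq k / (qq s * qq (k - s)) := by
  rw [qb, if_pos h, qbinom]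

lemma pascalA (k s : ℕ) : qb (k + 1) (s + 1) = qb k (s + 1) + q ^ ((k : ℤ) - s) * qb k s := by
  rcases lt_trichotomy k s with h | rfl | h
  · rw [qb_of_gt (by omega), qb_of_gt (by omega), qb_of_gt h, mul_zero, add_zero]
  · rw [qb_self, qb_self, qb_of_gt (by omega), sub_self, zpow_zero, one_mul, zero_add]
  · -- s + 1 ≤ k ; write k = s + d + 1
    obtain ⟨d, rfl⟩ : ∃ d, k = s + d + 1 := ⟨k - s - 1, by omega⟩
    rw [qb_eq (by omega), qb_eq (by omega), qb_eq (by omega)]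
    have e1 : s + d + 1 + 1 - (s + 1) = d + 1 := by omega
    have e2 : s + d + 1 - (s + 1) = d := by omega
    have e3 : s + d + 1 - s = d + 1 := by omega
    have e4 : ((s : ℤ) + d + 1 : ℤ) - s = ((d + 1 : ℕ) : ℤ) := by push_cast; ring
    rw [e1, e2, e3]
    have e4' : (((s + d + 1 : ℕ) : ℤ)) - (s : ℤ) = ((d + 1 : ℕ) : ℤ) := by push_cast; ring
    rw [e4', zpow_natCast]
    rw [show s + d + 1 + 1 = (s + d + 1) + 1 by ring, qq_succ (s + d + 1),
      qq_succ s, qq_succ d]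
    have hp : q ^ (s + d + 1 + 1) = q ^ (s + 1) * q ^ (d + 1) := by
      rw [← pow_add]; ring_nf
    rw [hp]
    have h1 := qq_ne_zero (s + d + 1)
    have h2 := qq_ne_zero s
    have h3 := qq_ne_zero d
    have h4 := one_sub_q_pow_ne_zero s
    have h5 := one_sub_q_pow_ne_zero d
    field_simp
    ring

lemma pascalB (k s : ℕ) : qb (k + 1) (s + 1) = q ^ (s + 1) * qb k (s + 1) + qb k s := by
  rcases lt_trichotomy k s with h | rfl | h
  · rw [qb_of_gt (by omega), qb_of_gt (by omega), qb_of_gt h, mul_zero, add_zero]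
  · rw [qb_self, qb_self, qb_of_gt (by omega), mul_zero, zero_add]
  · obtain ⟨d, rfl⟩ : ∃ d, k = s + d + 1 := ⟨k - s - 1, by omega⟩
    rw [qb_eq (by omega), qb_eq (by omega), qb_eq (by omega)]
    have e1 : s + d + 1 + 1 - (s + 1) = d + 1 := by omega
    have e2 : s + d + 1 - (s + 1) = d := by omega
    have e3 : s + d + 1 - s = d + 1 := by omega
    rw [e1, e2, e3]
    rw [show s + d + 1 + 1 = (s + d + 1) + 1 by ring, qq_succ (s + d + 1),
      qq_succ s, qq_succ d]
    have hp : q ^ (s + d + 1 + 1) = q ^ (s + 1) * q ^ (d + 1) := by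
      rw [← pow_add]; ring_nf
    rw [hp]
    have h1 := qq_ne_zero (s + d + 1)
    have h2 := qq_ne_zero s
    have h3 := qq_ne_zero d
    have h4 := one_sub_q_pow_ne_zero s
    have h5 := one_sub_q_pow_ne_zero d
    field_simp
    ring

lemma absorb (k s : ℕ) :
    (1 - q ^ (s + 1)) * qb k (s + 1) = (1 - q ^ ((k : ℤ) - s)) * qb k s := by
  rcases lt_trichotomy k s with h | rfl | h
  · rw [qb_of_gt (by omega), qb_of_gt h, mul_zero, mul_zero]
  · rw [qb_of_gt (by omega), qb_self, sub_self, zpow_zero, sub_self, mul_zero, mul_one]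
  · obtain ⟨d, rfl⟩ : ∃ d, k = s + d + 1 := ⟨k - s - 1, by omega⟩
    rw [qb_eq (by omega), qb_eq (by omega)]
    have e2 : s + d + 1 - (s + 1) = d := by omega
    have e3 : s + d + 1 - s = d + 1 := by omega
    rw [e2, e3]
    have e4' : (((s + d + 1 : ℕ) : ℤ)) - (s : ℤ) = ((d + 1 : ℕ) : ℤ) := by push_cast; ring
    rw [e4', zpow_natCast]
    rw [qq_succ s, qq_succ d]
    have h1 := qq_ne_zero (s + d + 1)
    have h2 := qq_ne_zero s
    have h3 := qq_ne_zero d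
    have h4 := one_sub_q_pow_ne_zero s
    have h5 := one_sub_q_pow_ne_zero d
    field_simp

noncomputable def w1 (s : ℕ) : RatFunc ℚ := q ^ ((s : ℤ) * ((s : ℤ) + 1))

noncomputable def w2 (s : ℕ) : RatFunc ℚ := q ^ ((s : ℤ) * ((s : ℤ) + 2))

noncomputable def w3 (s : ℕ) : RatFunc ℚ := q ^ ((s : ℤ) * ((s : ℤ) + 3))

noncomputable def hs (k : ℕ) : RatFunc ℚ := ∑ s ∈ range (k + 1), w1 s * qbinom k s

noncomputable def gs (k : ℕ) : RatFunc ℚ := ∑ s ∈ range (k + 1), w2 s * qbinom k s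

noncomputable def ws (k : ℕ) : RatFunc ℚ := ∑ s ∈ range (k + 1), w3 s * qbinom k s

lemma sum_qb_ext (f : ℕ → RatFunc ℚ) {k N : ℕ} (h : k + 1 ≤ N) :
    ∑ s ∈ range N, f s * qb k s = ∑ s ∈ range (k + 1), f s * qbinom k s := by
  have h1 : ∑ s ∈ range (k + 1), f s * qb k s = ∑ s ∈ range N, f s * qb k s :=
    Finset.sum_subset (Finset.range_subset_range.mpr h)
      (fun x _ hx => by
        rw [qb_of_gt (by simpa using hx), mul_zero])
  rw [← h1]
  exact Finset.sum_congr rfl fun s hs => by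
    rw [qb_eq (by have := Finset.mem_range.mp hs; omega), qbinom]

lemma hs_succ (k : ℕ) : hs (k + 1) = hs k + q ^ ((k : ℤ) + 2) * gs k := by
  have key : ∀ s : ℕ, w1 (s + 1) * qb (k + 1) (s + 1)
      = w1 (s + 1) * qb k (s + 1) + q ^ ((k : ℤ) + 2) * (w2 s * qb k s) := by
    intro s
    rw [pascalA k s]
    have hw : w1 (s + 1) * q ^ ((k : ℤ) - s) = q ^ ((k : ℤ) + 2) * w2 s := by
      rw [w1, w2, ← zpow_add₀ q_ne_zero, ← zpow_add₀ q_ne_zero]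
      congr 1; push_cast; ring
    calc w1 (s + 1) * (qb k (s + 1) + q ^ ((k : ℤ) - s) * qb k s)
        = w1 (s + 1) * qb k (s + 1) + (w1 (s + 1) * q ^ ((k : ℤ) - s)) * qb k s := by ring
      _ = _ := by rw [hw]; ring
  have e1 : hs (k + 1) = ∑ s ∈ range (k + 3), w1 s * qb (k + 1) s := by
    rw [hs, ← sum_qb_ext w1 (show (k + 1) + 1 ≤ k + 3 by omega)]
  rw [e1, Finset.sum_range_succ']
  have e2 : ∑ s ∈ range (k + 2), w1 (s + 1) * qb (k + 1) (s + 1)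
      = ∑ s ∈ range (k + 2), (w1 (s + 1) * qb k (s + 1) + q ^ ((k : ℤ) + 2) * (w2 s * qb k s)) :=
    Finset.sum_congr rfl fun s _ => key s
  rw [e2, Finset.sum_add_distrib, ← Finset.mul_sum]
  have e3 : w1 0 * qb (k + 1) 0 = w1 0 * qb k 0 := by rw [qb_zero, qb_zero]
  have e4 := Finset.sum_range_succ' (fun s => w1 s * qb k s) (k + 2)
  have e5 : ∑ s ∈ range (k + 3), w1 s * qb k s = hs k := by
    rw [sum_qb_ext w1 (by omega)]; rfl
  have e6 : ∑ s ∈ range (k + 2), w2 s * qb k s = gs k := by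
    rw [sum_qb_ext w2 (by omega)]; rfl
  rw [e3, e6]
  linear_combination e5 - e4

lemma gs_succ (k : ℕ) : gs (k + 1) = gs k + q ^ ((k : ℤ) + 3) * ws k := by
  have key : ∀ s : ℕ, w2 (s + 1) * qb (k + 1) (s + 1)
      = w2 (s + 1) * qb k (s + 1) + q ^ ((k : ℤ) + 3) * (w3 s * qb k s) := by
    intro s
    rw [pascalA k s]
    have hw : w2 (s + 1) * q ^ ((k : ℤ) - s) = q ^ ((k : ℤ) + 3) * w3 s := by
      rw [w2, w3, ← zpow_add₀ q_ne_zero, ← zpow_add₀ q_ne_zero]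
      congr 1; push_cast; ring
    calc w2 (s + 1) * (qb k (s + 1) + q ^ ((k : ℤ) - s) * qb k s)
        = w2 (s + 1) * qb k (s + 1) + (w2 (s + 1) * q ^ ((k : ℤ) - s)) * qb k s := by ring
      _ = _ := by rw [hw]; ring
  have e1 : gs (k + 1) = ∑ s ∈ range (k + 3), w2 s * qb (k + 1) s := by
    rw [gs, ← sum_qb_ext w2 (show (k + 1) + 1 ≤ k + 3 by omega)]
  rw [e1, Finset.sum_range_succ']
  have e2 : ∑ s ∈ range (k + 2), w2 (s + 1) * qb (k + 1) (s + 1)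
      = ∑ s ∈ range (k + 2), (w2 (s + 1) * qb k (s + 1) + q ^ ((k : ℤ) + 3) * (w3 s * qb k s)) :=
    Finset.sum_congr rfl fun s _ => key s
  rw [e2, Finset.sum_add_distrib, ← Finset.mul_sum]
  have e3 : w2 0 * qb (k + 1) 0 = w2 0 * qb k 0 := by rw [qb_zero, qb_zero]
  have e4 := Finset.sum_range_succ' (fun s => w2 s * qb k s) (k + 2)
  have e5 : ∑ s ∈ range (k + 3), w2 s * qb k s = gs k := by
    rw [sum_qb_ext w2 (by omega)]; rfl
  have e6 : ∑ s ∈ range (k + 2), w3 s * qb k s = ws k := by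
    rw [sum_qb_ext w3 (by omega)]; rfl
  rw [e3, e6]
  linear_combination e5 - e4

lemma hg_ws (k : ℕ) : hs k - gs k = q ^ (2 : ℤ) * ws k - q ^ ((k : ℤ) + 2) * gs k := by
  have key : ∀ s : ℕ, (w1 (s + 1) - w2 (s + 1)) * qb k (s + 1)
      = q ^ (2 : ℤ) * (w3 s * qb k s) - q ^ ((k : ℤ) + 2) * (w2 s * qb k s) := by
    intro s
    have hsplit : w1 (s + 1) - w2 (s + 1) = w1 (s + 1) * (1 - q ^ (s + 1)) := by
      have hnat : w2 (s + 1) = w1 (s + 1) * q ^ (s + 1) := by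
        rw [w1, w2, ← zpow_natCast q (s + 1), ← zpow_add₀ q_ne_zero,
          show ((↑(s+1) * (↑(s+1)+1) + ↑(s+1) : ℤ)) = (↑(s+1) * (↑(s+1)+2) : ℤ) by push_cast; ring]
      rw [hnat]; ring
    rw [hsplit, mul_assoc, absorb k s]
    have hw2 : w1 (s + 1) = q ^ (2 : ℤ) * w3 s := by
      rw [w1, w3, ← zpow_add₀ q_ne_zero]; congr 1; push_cast; ring
    have hw3 : w1 (s + 1) * q ^ ((k : ℤ) - s) = q ^ ((k : ℤ) + 2) * w2 s := by
      rw [w1, w2, ← zpow_add₀ q_ne_zero, ← zpow_add₀ q_ne_zero]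
      congr 1; push_cast; ring
    calc w1 (s + 1) * ((1 - q ^ ((k : ℤ) - s)) * qb k s)
        = w1 (s + 1) * qb k s - (w1 (s + 1) * q ^ ((k : ℤ) - s)) * qb k s := by ring
      _ = _ := by rw [hw3, hw2]; ring
  have e1 : hs k - gs k = ∑ s ∈ range (k + 2), (w1 s - w2 s) * qb k s := by
    rw [sum_qb_ext (fun s => w1 s - w2 s) (by omega)]
    rw [hs, gs, ← Finset.sum_sub_distrib]
    exact Finset.sum_congr rfl fun s _ => by ring
  rw [e1, Finset.sum_range_succ']
  have e2 : ∑ s ∈ range (k + 1), (w1 (s + 1) - w2 (s + 1)) * qb k (s + 1)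
      = ∑ s ∈ range (k + 1), (q ^ (2 : ℤ) * (w3 s * qb k s) - q ^ ((k : ℤ) + 2) * (w2 s * qb k s)) :=
    Finset.sum_congr rfl fun s _ => key s
  have e3 : (w1 0 - w2 0) * qb k 0 = 0 := by
    rw [w1, w2]; norm_num
  rw [e2, e3, Finset.sum_sub_distrib, ← Finset.mul_sum, ← Finset.mul_sum]
  have e6 : ∑ s ∈ range (k + 1), w3 s * qb k s = ws k := by
    rw [sum_qb_ext w3 (by omega)]; rfl
  have e7 : ∑ s ∈ range (k + 1), w2 s * qb k s = gs k := by
    rw [sum_qb_ext w2 (by omega)]; rfl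
  rw [e6, e7, add_zero]

lemma gs_rec (k : ℕ) : gs (k + 1)
    = (1 - q ^ ((k : ℤ) + 1) + q ^ (2 * (k : ℤ) + 3)) * gs k + q ^ ((k : ℤ) + 1) * hs k := by
  have h1 := gs_succ k
  have h2 := hg_ws k
  have e1 : q ^ ((k : ℤ) + 3) = q ^ ((k : ℤ) + 1) * q ^ (2 : ℤ) := by
    rw [← zpow_add₀ q_ne_zero, show ((k:ℤ) + 1 + 2) = ((k:ℤ) + 3) by ring]
  have e2 : q ^ ((k : ℤ) + 1) * q ^ ((k : ℤ) + 2) = q ^ (2 * (k : ℤ) + 3) := by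
    rw [← zpow_add₀ q_ne_zero]; congr 1; ring
  calc gs (k + 1) = gs k + q ^ ((k : ℤ) + 1) * (q ^ (2 : ℤ) * ws k) := by
        rw [h1, e1]; ring
    _ = gs k + q ^ ((k : ℤ) + 1) * (hs k - gs k + q ^ ((k : ℤ) + 2) * gs k) := by
        rw [show q ^ (2:ℤ) * ws k = hs k - gs k + q ^ ((k : ℤ) + 2) * gs k by
          linear_combination -h2]
    _ = _ := by rw [← e2]; ring

noncomputable def AA (M X Y : RatFunc ℚ) : RatFunc ℚ :=
  (-1 + q ^ 2 * M) * X ^ 2 + (-(q ^ 3 * M * X) - q ^ 2 * M * X ^ 2 - q ^ 3 * M * X ^ 3) * Y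
  + (q ^ 3 * M * X + (q ^ 3 + q ^ 4) * M * X ^ 2 + q ^ 3 * M * X ^ 3) * Y ^ 2
  + (-(q ^ 4 * M * (X + X ^ 2 + X ^ 3))) * Y ^ 3 + q ^ 5 * M * X ^ 2 * Y ^ 4

noncomputable def BB (M X Y : RatFunc ℚ) : RatFunc ℚ :=
  -(q ^ 3 * M * X ^ 2) * Y + q ^ 4 * M * (X + X ^ 3) * Y ^ 2 - q ^ 5 * M * X ^ 2 * Y ^ 3

noncomputable def PP (M X Y : RatFunc ℚ) : RatFunc ℚ :=
  (q * M - 1) * (q ^ 2 * M - 1) * X ^ 2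
  + (-(q ^ 2 * M) * (q ^ 2 * M - 1) * X * (1 + q + X + (1 + q) * X ^ 2)) * Y
  + (q ^ 3 * M * (q ^ 3 * M + (q ^ 2 * M + q ^ 3 * M - 1) * X
      + (q ^ 2 * M + 2 * q ^ 3 * M + q ^ 4 * M - 2 - q) * X ^ 2
      + (q ^ 2 * M + q ^ 3 * M - 1) * X ^ 3 + q ^ 3 * M * X ^ 4)) * Y ^ 2
  + (-(q ^ 4 * M) * (q ^ 3 * M + (q ^ 3 * M + q ^ 4 * M - 1) * X
      + (q ^ 2 * M + 2 * q ^ 3 * M + q ^ 4 * M - 1) * X ^ 2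
      + (q ^ 3 * M + q ^ 4 * M - 1) * X ^ 3 + q ^ 3 * M * X ^ 4)) * Y ^ 3
  + (q ^ 5 * M * X * (q ^ 3 * M + q ^ 4 * M + (q ^ 4 * M - 1) * X
      + (q ^ 3 * M + q ^ 4 * M) * X ^ 2)) * Y ^ 4
  + (-(q ^ 10 * M ^ 2) * X ^ 2) * Y ^ 5

set_option maxHeartbeats 1000000 in

lemma key_alg (M X Y h g : RatFunc ℚ) (hX : X ≠ 0) (hY : Y ≠ 0) :
    M * ((X)⁻¹ * (1 - q * X * Y) * (1 - X * (q * Y)⁻¹)) * (-1) * (q ^ 2 * Y) *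
      (AA M X (q * Y) * (h + q ^ 2 * Y * g)
        + BB M X (q * Y) * ((1 - q * Y + q ^ 3 * Y ^ 2) * g + q * Y * h))
      - (AA M X Y * h + BB M X Y * g)
    = h * PP M X Y := by
  have hq := q_ne_zero
  rw [AA, AA, BB, BB, PP]
  field_simp
  ring

lemma boundary_alg (M X : RatFunc ℚ) : AA M X 1 + BB M X 1 = -X ^ 2 := by
  rw [AA, BB]; ring

lemma c_zero (n : ℤ) : c n 0 = 1 := by simp [c]

lemma c_succ (n : ℤ) (k : ℕ) :
    c n (k + 1) = c n k * ((q ^ n)⁻¹ * (1 - q * q ^ n * q ^ (k : ℤ)) *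
      (1 - q ^ n * (q * q ^ (k : ℤ))⁻¹)) := by
  have h1 : q ^ (n + 1) * q ^ (k : ℤ) = q * q ^ n * q ^ (k : ℤ) := by
    rw [zpow_add₀ q_ne_zero, zpow_one]; ring
  have h2 : q ^ (n - 1) * q ^ (-(k : ℤ)) = q ^ n * (q * q ^ (k : ℤ))⁻¹ := by
    have l : q ^ (n - 1) * q ^ (-(k : ℤ)) = q ^ (n - 1 - (k : ℤ)) := by
      rw [zpow_sub₀ q_ne_zero (n - 1) (k : ℤ), zpow_neg, div_eq_mul_inv]
    have r : q ^ n * (q * q ^ (k : ℤ))⁻¹ = q ^ (n - 1 - (k : ℤ)) := by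
      rw [mul_inv, ← zpow_neg_one q, ← zpow_neg q (k : ℤ),
        ← zpow_add₀ q_ne_zero (-1 : ℤ) (-(k : ℤ)), ← zpow_add₀ q_ne_zero n (-1 + -(k : ℤ))]
      congr 1; ring
    rw [l, r]
  have h3 : q ^ (-((k : ℕ) + 1 : ℤ) * n) = q ^ (-(k : ℤ) * n) * (q ^ n)⁻¹ := by
    rw [← zpow_neg q n, ← zpow_add₀ q_ne_zero]
    congr 1; ring
  have h4 : (-(((k + 1 : ℕ)) : ℤ)) * n = (-((k : ℕ) + 1 : ℤ)) * n := by push_cast; ring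
  rw [c, c, Finset.prod_range_succ, Finset.prod_range_succ, h4, h3, h1, h2]
  ring

lemma c_vanish (n : ℤ) (hn : 1 ≤ n) : c n n.toNat = 0 := by
  rw [c]
  apply mul_eq_zero_of_right
  apply Finset.prod_eq_zero (i := n.toNat - 1) (Finset.mem_range.mpr (by omega))
  have h1 : (n - 1) + (-((n.toNat - 1 : ℕ) : ℤ)) = 0 := by
    have h2 : (1 : ℕ) ≤ n.toNat := by omega
    push_cast [h2]
    omega
  rw [← zpow_add₀ q_ne_zero, h1, zpow_zero, sub_self]

lemma exp_succ (k : ℕ) :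
    (((k + 1 : ℕ) : ℤ) * (((k + 1 : ℕ) : ℤ) + 3)) / 2
      = ((k : ℤ) * ((k : ℤ) + 3)) / 2 + ((k : ℤ) + 2) := by
  obtain ⟨e, he⟩ := Int.even_mul_succ_self (k : ℤ)
  have h1 : (k : ℤ) * ((k : ℤ) + 3) = 2 * (e + k) := by linear_combination he
  have h2 : (((k + 1 : ℕ) : ℤ)) * (((k + 1 : ℕ) : ℤ) + 3) = 2 * (e + 2 * k + 2) := by
    push_cast; linear_combination he
  rw [h1, h2, Int.mul_ediv_cancel_left _ two_ne_zero, Int.mul_ediv_cancel_left _ two_ne_zero]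
  ring

noncomputable def uu (m n : ℤ) (k : ℕ) : RatFunc ℚ :=
  q ^ ((k : ℤ) * m) * c n k * (-1) ^ k * q ^ ((k : ℤ) * ((k : ℤ) + 3) / 2) *
    (AA (q ^ m) (q ^ n) (q ^ (k : ℤ)) * hs k + BB (q ^ m) (q ^ n) (q ^ (k : ℤ)) * gs k)

lemma H52_eq (k : ℕ) : H52 k = (-1) ^ k * q ^ ((k : ℤ) * ((k : ℤ) + 3) / 2) * hs k := rfl

lemma hs_zero : hs 0 = 1 := by
  simp [hs, w1, qbinom, qq_zero]

lemma gs_zero : gs 0 = 1 := by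
  simp [gs, w2, qbinom, qq_zero]

lemma step (m n : ℤ) (k : ℕ) :
    uu m n (k + 1) - uu m n k
      = c n k * H52 k * q ^ ((k : ℤ) * m) * PP (q ^ m) (q ^ n) (q ^ (k : ℤ)) := by
  have hq := q_ne_zero
  have hX : (q : RatFunc ℚ) ^ n ≠ 0 := zpow_ne_zero n hq
  have hY : (q : RatFunc ℚ) ^ (k : ℤ) ≠ 0 := zpow_ne_zero _ hq
  have r1 : q ^ ((((k + 1) : ℕ) : ℤ) * m) = q ^ ((k : ℤ) * m) * q ^ m := by
    rw [← zpow_add₀ hq]; congr 1; push_cast; ring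
  have r3 : ((-1 : RatFunc ℚ)) ^ (k + 1) = (-1) ^ k * (-1) := by rw [pow_succ]
  have rq2 : (q : RatFunc ℚ) ^ ((2 : ℤ)) = q ^ (2 : ℕ) := by norm_cast
  have rq3 : (q : RatFunc ℚ) ^ ((3 : ℤ)) = q ^ (3 : ℕ) := by norm_cast
  have r4 : q ^ ((((k + 1) : ℕ) : ℤ) * ((((k + 1) : ℕ) : ℤ) + 3) / 2)
      = q ^ ((k : ℤ) * ((k : ℤ) + 3) / 2) * (q ^ (2 : ℕ) * q ^ (k : ℤ)) := by
    rw [exp_succ k, zpow_add₀ hq, zpow_add₀ hq, rq2]; ring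
  have r5 : q ^ ((((k + 1) : ℕ)) : ℤ) = q * q ^ (k : ℤ) := by
    rw [show ((((k + 1) : ℕ)) : ℤ) = (k : ℤ) + 1 by push_cast; ring, zpow_add₀ hq, zpow_one]
    ring
  have r6 : hs (k + 1) = hs k + q ^ (2 : ℕ) * q ^ (k : ℤ) * gs k := by
    rw [hs_succ k, zpow_add₀ hq, rq2]; ring
  have r7 : gs (k + 1) = (1 - q * q ^ (k : ℤ) + q ^ (3 : ℕ) * (q ^ (k : ℤ)) ^ (2 : ℕ)) * gs k
      + q * q ^ (k : ℤ) * hs k := by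
    rw [gs_rec k, zpow_add₀ hq, zpow_one]
    have h23 : q ^ (2 * (k : ℤ) + 3) = q ^ (3 : ℕ) * (q ^ (k : ℤ)) ^ (2 : ℕ) := by
      rw [← zpow_natCast (q ^ (k : ℤ)) 2, ← zpow_mul, ← rq3, ← zpow_add₀ hq]
      congr 1; push_cast; ring
    rw [h23]; ring
  have halg := key_alg (q ^ m) (q ^ n) (q ^ (k : ℤ)) (hs k) (gs k) hX hY
  calc uu m n (k + 1) - uu m n k
      = (q ^ ((k : ℤ) * m) * c n k * (-1) ^ k * q ^ ((k : ℤ) * ((k : ℤ) + 3) / 2)) *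
        (q ^ m * ((q ^ n)⁻¹ * (1 - q * q ^ n * q ^ (k : ℤ)) *
            (1 - q ^ n * (q * q ^ (k : ℤ))⁻¹)) * (-1) * (q ^ (2 : ℕ) * q ^ (k : ℤ)) *
          (AA (q ^ m) (q ^ n) (q * q ^ (k : ℤ)) * (hs k + q ^ (2 : ℕ) * q ^ (k : ℤ) * gs k)
            + BB (q ^ m) (q ^ n) (q * q ^ (k : ℤ)) *
              ((1 - q * q ^ (k : ℤ) + q ^ (3 : ℕ) * (q ^ (k : ℤ)) ^ (2 : ℕ)) * gs k
                + q * q ^ (k : ℤ) * hs k))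
          - (AA (q ^ m) (q ^ n) (q ^ (k : ℤ)) * hs k
              + BB (q ^ m) (q ^ n) (q ^ (k : ℤ)) * gs k)) := by
        rw [uu, uu, r1, c_succ n k, r3, r4, r5, r6, r7]; ring
    _ = (q ^ ((k : ℤ) * m) * c n k * (-1) ^ k * q ^ ((k : ℤ) * ((k : ℤ) + 3) / 2)) *
        (hs k * PP (q ^ m) (q ^ n) (q ^ (k : ℤ))) := by rw [halg]
    _ = c n k * H52 k * q ^ ((k : ℤ) * m) * PP (q ^ m) (q ^ n) (q ^ (k : ℤ)) := by
        rw [H52_eq]; ring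

lemma DJ_shift (n m : ℤ) (j : ℕ) : DJ52 n (m + j)
    = ∑ k ∈ range n.toNat, c n k * H52 k * q ^ ((k : ℤ) * m) * (q ^ (k : ℤ)) ^ j := by
  rw [DJ52]
  refine Finset.sum_congr rfl fun k _ => ?_
  have h : q ^ ((k : ℤ) * (m + (j : ℤ))) = q ^ ((k : ℤ) * m) * (q ^ (k : ℤ)) ^ j := by
    rw [← zpow_natCast (q ^ (k : ℤ)) j, ← zpow_mul, ← zpow_add₀ q_ne_zero]
    congr 1; ring
  rw [h]; ring

/-- The inhomogeneous fifth-order linear `q`-difference equation for the descendant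
colored Jones polynomials of `5₂`, with `x = qⁿ`. -/
theorem DJ52_recursion (m n : ℤ) (hn : 1 ≤ n) :
    let x : RatFunc ℚ := q ^ n
    (-1 + q ^ (1 + m)) * (-1 + q ^ (2 + m)) * x ^ 2 * DJ52 n m -
      q ^ (2 + m) * (-1 + q ^ (2 + m)) * x * (1 + q + x + (1 + q) * x ^ 2) * DJ52 n (m + 1) +
      q ^ (3 + m) * (q ^ (3 + m) + (-1 + q ^ (2 + m) + q ^ (3 + m)) * x +
        (-2 - q + q ^ (2 + m) + 2 * q ^ (3 + m) + q ^ (4 + m)) * x ^ 2 +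
        (-1 + q ^ (2 + m) + q ^ (3 + m)) * x ^ 3 + q ^ (3 + m) * x ^ 4) * DJ52 n (m + 2) -
      q ^ (4 + m) * (q ^ (3 + m) + (-1 + q ^ (3 + m) + q ^ (4 + m)) * x +
        (-1 + q ^ (2 + m) + 2 * q ^ (3 + m) + q ^ (4 + m)) * x ^ 2 +
        (-1 + q ^ (3 + m) + q ^ (4 + m)) * x ^ 3 + q ^ (3 + m) * x ^ 4) * DJ52 n (m + 3) +
      q ^ (5 + m) * x * (q ^ (3 + m) + q ^ (4 + m) + (-1 + q ^ (4 + m)) * x +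
        (q ^ (3 + m) + q ^ (4 + m)) * x ^ 2) * DJ52 n (m + 4) -
      q ^ (10 + 2 * m) * x ^ 2 * DJ52 n (m + 5) = x ^ 2 := by
  intro x
  have hq := q_ne_zero
  have hx : x = q ^ n := rfl
  -- coefficient bridges
  have b1 : q ^ (1 + m) = q * q ^ m := by rw [zpow_add₀ hq, zpow_one]
  have b2 : q ^ (2 + m) = q ^ (2 : ℕ) * q ^ m := by
    rw [zpow_add₀ hq]; norm_cast
  have b3 : q ^ (3 + m) = q ^ (3 : ℕ) * q ^ m := by
    rw [zpow_add₀ hq]; norm_cast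
  have b4 : q ^ (4 + m) = q ^ (4 : ℕ) * q ^ m := by
    rw [zpow_add₀ hq]; norm_cast
  have b5 : q ^ (5 + m) = q ^ (5 : ℕ) * q ^ m := by
    rw [zpow_add₀ hq]; norm_cast
  have b10 : q ^ (10 + 2 * m) = q ^ (10 : ℕ) * (q ^ m) ^ (2 : ℕ) := by
    rw [zpow_add₀ hq, show (2 * m) = m * 2 by ring, zpow_mul]; norm_cast
  -- DJ52 shifts
  have hD0 := DJ_shift n m 0
  have hD1 := DJ_shift n m 1
  have hD2 := DJ_shift n m 2
  have hD3 := DJ_shift n m 3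
  have hD4 := DJ_shift n m 4
  have hD5 := DJ_shift n m 5
  norm_num at hD0 hD1 hD2 hD3 hD4 hD5
  rw [hx, b1, b2, b3, b4, b5, b10, hD0, hD1, hD2, hD3, hD4, hD5]
  rw [Finset.mul_sum, Finset.mul_sum, Finset.mul_sum, Finset.mul_sum, Finset.mul_sum,
    Finset.mul_sum]
  simp only [← Finset.sum_sub_distrib, ← Finset.sum_add_distrib]
  calc ∑ k ∈ Finset.range n.toNat,
      ((-1 + q * q ^ m) * (-1 + q ^ 2 * q ^ m) * (q ^ n) ^ 2 * (c n k * H52 k * q ^ ((k:ℤ) * m)) -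
          q ^ 2 * q ^ m * (-1 + q ^ 2 * q ^ m) * q ^ n * (1 + q + q ^ n + (1 + q) * (q ^ n) ^ 2) *
            (c n k * H52 k * q ^ ((k:ℤ) * m) * q ^ k) +
          q ^ 3 * q ^ m *
            (q ^ 3 * q ^ m + (-1 + q ^ 2 * q ^ m + q ^ 3 * q ^ m) * q ^ n +
              (-2 - q + q ^ 2 * q ^ m + 2 * (q ^ 3 * q ^ m) + q ^ 4 * q ^ m) * (q ^ n) ^ 2 +
              (-1 + q ^ 2 * q ^ m + q ^ 3 * q ^ m) * (q ^ n) ^ 3 +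
              q ^ 3 * q ^ m * (q ^ n) ^ 4) *
            (c n k * H52 k * q ^ ((k:ℤ) * m) * (q ^ k) ^ 2) -
          q ^ 4 * q ^ m *
            (q ^ 3 * q ^ m + (-1 + q ^ 3 * q ^ m + q ^ 4 * q ^ m) * q ^ n +
              (-1 + q ^ 2 * q ^ m + 2 * (q ^ 3 * q ^ m) + q ^ 4 * q ^ m) * (q ^ n) ^ 2 +
              (-1 + q ^ 3 * q ^ m + q ^ 4 * q ^ m) * (q ^ n) ^ 3 +
              q ^ 3 * q ^ m * (q ^ n) ^ 4) *
            (c n k * H52 k * q ^ ((k:ℤ) * m) * (q ^ k) ^ 3) +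
          q ^ 5 * q ^ m * q ^ n *
            (q ^ 3 * q ^ m + q ^ 4 * q ^ m + (-1 + q ^ 4 * q ^ m) * q ^ n +
              (q ^ 3 * q ^ m + q ^ 4 * q ^ m) * (q ^ n) ^ 2) *
            (c n k * H52 k * q ^ ((k:ℤ) * m) * (q ^ k) ^ 4) -
          q ^ 10 * (q ^ m) ^ 2 * (q ^ n) ^ 2 * (c n k * H52 k * q ^ ((k:ℤ) * m) * (q ^ k) ^ 5))
      = ∑ k ∈ Finset.range n.toNat, (uu m n (k + 1) - uu m n k) := by
        refine Finset.sum_congr rfl fun k _ => ?_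
        rw [step m n k, PP, ← zpow_natCast q k]
        ring
    _ = uu m n n.toNat - uu m n 0 := Finset.sum_range_sub (uu m n) n.toNat
    _ = (q ^ n) ^ 2 := by
        have h0 : uu m n n.toNat = 0 := by rw [uu, c_vanish n hn]; ring
        have h1 : uu m n 0 = -(q ^ n) ^ 2 := by
          rw [uu, c_zero, hs_zero, gs_zero]
          norm_num
          linear_combination boundary_alg (q ^ m) (q ^ n)
        rw [h0, h1]; ring
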